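/- For every r ≥ 1 and m ≠ n, the coefficient (u_n^{(r)})_m admits an expansion as a sum over paths of length r from m to n: (u_n^{(r)})_m = Σ_{γ: m→n, |γ|=r} g(γ, D) B_γ, where for an irreducible path γ = (n_0,...,n_r) (one with n_j ≠ n for 0 ≤ j ≤ r−1) the coefficient is g(γ, D) = Π_{j=0}^{r-1} 1/(D_n − D_{n_j}). -/

import Mathlib

/-!
Split `u r m` as `I r m + R r m`, where `I r m` sums `g(γ, D) B_γ` over the irreducible paths
`m → n` of length `r` and `R r m` lies in the span of the weights of reducible paths (those that
visit `n` before their last step). Peeling off the first edge of an irreducible path gives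
`I (r + 1) m = (D n - D m)⁻¹ ∑ ℓ, B m ℓ * I r ℓ`, which is the first sum in the recursion for
`u (r + 1) m`. Prefixing an edge to a reducible path keeps it reducible, and every term of
`η s * u (r - s) m` is the weight of a path `m → n` followed by a loop `n → n`, which is reducible.
Strong induction on `r` therefore keeps `u r m - I r m` in the reducible span, and the
coefficients of that span element define `g` on reducible paths.
-/

open Finset

namespace PathExpansion

variable {S : Type*}

def pathWeight {R : Type*} [CommMonoid R] (B : Matrix S S R) {r : ℕ} (γ : Fin (r + 1) → S) : R :=
  ∏ i : Fin r, B (γ i.castSucc) (γ i.succ)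

def paths (r : ℕ) (m n : S) : Set (Fin (r + 1) → S) :=
  {γ | γ 0 = m ∧ γ (Fin.last r) = n}

def IsIrreducible (n : S) {r : ℕ} (γ : Fin (r + 1) → S) : Prop :=
  ∀ j, j ≠ Fin.last r → γ j ≠ n

def reduciblePaths (r : ℕ) (m n : S) : Set (Fin (r + 1) → S) :=
  {γ | γ ∈ paths r m n ∧ ¬IsIrreducible n γ}

def concat {a b : ℕ} (ε : Fin (a + 1) → S) (δ : Fin (b + 1) → S) : Fin (a + b + 1) → S :=
  fun j => if h : (j : ℕ) ≤ a then ε ⟨j, by omega⟩ else δ ⟨j - a, by omega⟩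

section concat

variable {a b : ℕ} (ε : Fin (a + 1) → S) (δ : Fin (b + 1) → S)

theorem concat_of_le (j : Fin (a + b + 1)) (h : (j : ℕ) ≤ a) :
    concat ε δ j = ε ⟨j, by omega⟩ :=
  dif_pos h

theorem concat_natAdd (hc : ε (Fin.last a) = δ 0) (j : Fin (b + 1)) :
    concat ε δ ⟨a + j, by omega⟩ = δ j := by
  rcases Fin.eq_zero_or_eq_succ j with rfl | ⟨i, rfl⟩
  · exact (concat_of_le _ _ _ (by simp)).trans ((congrArg ε (Fin.ext (by simp))).trans hc)
  · exact (dif_neg (by simp)).trans (congrArg δ (Fin.ext (by simp)))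

theorem pathWeight_concat {R : Type*} [CommMonoid R] (B : Matrix S S R)
    (hc : ε (Fin.last a) = δ 0) :
    pathWeight B (concat ε δ) = pathWeight B ε * pathWeight B δ := by
  rw [pathWeight, Fin.prod_univ_add]
  congr 1 <;> refine prod_congr rfl fun i _ => ?_
  · rw [concat_of_le _ _ _ (by simp), concat_of_le _ _ _ (by simp)]
    rfl
  · exact congrArg₂ B (concat_natAdd ε δ hc i.castSucc) (concat_natAdd ε δ hc i.succ)

theorem concat_mem_reduciblePaths {m n : S} (hε : ε ∈ paths a m n) (hδ : δ ∈ paths b n n)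
    (hb : 1 ≤ b) : concat ε δ ∈ reduciblePaths (a + b) m n := by
  have hc : ε (Fin.last a) = δ 0 := hε.2.trans hδ.1.symm
  refine ⟨⟨?_, ?_⟩, fun hirr => hirr ⟨a, by omega⟩ (fun hlast => ?_) ?_⟩
  · rw [concat_of_le _ _ _ (by simp)]
    exact hε.1
  · rw [← hδ.2, ← concat_natAdd ε δ hc]
    rfl
  · simp [Fin.ext_iff] at hlast
    omega
  · rw [concat_of_le _ _ _ le_rfl]
    exact hε.2

end concat

section cons

variable {b : ℕ} (x : S) (δ : Fin (b + 1) → S)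

theorem cons_last : (Fin.cons x δ : Fin (b + 2) → S) (Fin.last (b + 1)) = δ (Fin.last b) := by
  rw [← Fin.succ_last, Fin.cons_succ]

theorem pathWeight_cons {R : Type*} [CommMonoid R] (B : Matrix S S R) :
    pathWeight B (Fin.cons x δ : Fin (b + 2) → S) = B x (δ 0) * pathWeight B δ := by
  simp only [pathWeight, Fin.prod_univ_succ, Fin.castSucc_zero, Fin.cons_zero, Fin.cons_succ,
    ← Fin.succ_castSucc]

theorem isIrreducible_cons_iff {n : S} :
    IsIrreducible n (Fin.cons x δ : Fin (b + 2) → S) ↔ x ≠ n ∧ IsIrreducible n δ := by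
  simp [IsIrreducible, Fin.forall_fin_succ, ← Fin.succ_last, (Fin.succ_ne_zero _).symm]

end cons

section span

variable {R : Type*} [CommSemiring R] (B : Matrix S S R)

theorem mul_mem_span_cons {b : ℕ} (x ℓ : S) {P : Set (Fin (b + 1) → S)} (hP : ∀ δ ∈ P, δ 0 = ℓ)
    {y : R} (hy : y ∈ Submodule.span R (pathWeight B '' P)) :
    B x ℓ * y ∈ Submodule.span R
      (pathWeight B '' ((fun δ : Fin (b + 1) → S => (Fin.cons x δ : Fin (b + 2) → S)) '' P)) := by
  have himage : (B x ℓ * ·) '' (pathWeight B '' P) =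
      pathWeight B '' ((fun δ : Fin (b + 1) → S => (Fin.cons x δ : Fin (b + 2) → S)) '' P) := by
    simp only [Set.image_image, pathWeight_cons]
    exact Set.image_congr fun δ hδ => by rw [hP δ hδ]
  have hmap := Submodule.mem_map_of_mem (f := LinearMap.mulLeft R (B x ℓ)) hy
  rw [← Submodule.span_image] at hmap
  rwa [← himage]

theorem mul_mem_span_paths_cons {b : ℕ} (x ℓ n : S) {y : R}
    (hy : y ∈ Submodule.span R (pathWeight B '' paths b ℓ n)) :
    B x ℓ * y ∈ Submodule.span R (pathWeight B '' paths (b + 1) x n) := by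
  refine Submodule.span_mono (Set.image_mono ?_) (mul_mem_span_cons B x ℓ (fun δ hδ => hδ.1) hy)
  rintro _ ⟨δ, hδ, rfl⟩
  exact ⟨Fin.cons_zero _ _, (cons_last x δ).trans hδ.2⟩

theorem mul_mem_span_reducible_cons {b : ℕ} (x ℓ n : S) {y : R}
    (hy : y ∈ Submodule.span R (pathWeight B '' reduciblePaths b ℓ n)) :
    B x ℓ * y ∈ Submodule.span R (pathWeight B '' reduciblePaths (b + 1) x n) := by
  refine Submodule.span_mono (Set.image_mono ?_)
    (mul_mem_span_cons B x ℓ (fun δ hδ => hδ.1.1) hy)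
  rintro _ ⟨δ, ⟨hδ, hred⟩, rfl⟩
  exact ⟨⟨Fin.cons_zero _ _, (cons_last x δ).trans hδ.2⟩,
    fun h => hred ((isIrreducible_cons_iff x δ).1 h).2⟩

theorem mul_mem_span_concat {a b r : ℕ} (hab : a + b = r) (hb : 1 ≤ b) {m n : S} {y z : R}
    (hy : y ∈ Submodule.span R (pathWeight B '' paths a m n))
    (hz : z ∈ Submodule.span R (pathWeight B '' paths b n n)) :
    y * z ∈ Submodule.span R (pathWeight B '' reduciblePaths r m n) := by
  subst hab
  have hmul := Submodule.mul_mem_mul hy hz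
  rw [Submodule.span_mul_span] at hmul
  refine Submodule.span_mono ?_ hmul
  rintro _ ⟨_, ⟨ε, hε, rfl⟩, _, ⟨δ, hδ, rfl⟩, rfl⟩
  exact ⟨concat ε δ, concat_mem_reduciblePaths ε δ hε hδ hb,
    pathWeight_concat ε δ B (hε.2.trans hδ.1.symm)⟩

end span

section irredCoeff

variable {K : Type*} [Field K] (D : S → K) (n : S)

/-- The paper's `g(γ, D)` on irreducible paths, extended by `0` to reducible ones. -/
noncomputable def irredCoeff {r : ℕ} (γ : Fin (r + 1) → S) : K :=
  open scoped Classical in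
  if IsIrreducible n γ then ∏ j : Fin r, (D n - D (γ j.castSucc))⁻¹ else 0

theorem irredCoeff_of_isIrreducible {r : ℕ} {γ : Fin (r + 1) → S} (hγ : IsIrreducible n γ) :
    irredCoeff D n γ = ∏ j : Fin (r + 1), if j ≠ Fin.last r then (D n - D (γ j))⁻¹ else 1 := by
  simp [irredCoeff, hγ, Fin.prod_univ_castSucc, Fin.castSucc_ne_last]

theorem irredCoeff_cons [DecidableEq S] {b : ℕ} (x : S) (δ : Fin (b + 1) → S) :
    irredCoeff D n (Fin.cons x δ : Fin (b + 2) → S) =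
      if x = n then 0 else (D n - D x)⁻¹ * irredCoeff D n δ := by
  by_cases hx : x = n
  · simp [irredCoeff, isIrreducible_cons_iff, hx]
  · by_cases hδ : IsIrreducible n δ
    · simp [irredCoeff, isIrreducible_cons_iff, hx, hδ, Fin.prod_univ_succ, mul_comm]
    · simp [irredCoeff, isIrreducible_cons_iff, hx, hδ]

end irredCoeff

theorem sum_pi_fin_succ [Fintype S] {M : Type*} [AddCommMonoid M] {k : ℕ}
    (F : (Fin (k + 1) → S) → M) :
    ∑ γ, F γ = ∑ x, ∑ δ : Fin k → S, F (Fin.cons x δ) := by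
  rw [← (Fin.consEquiv fun _ => S).sum_comp, Fintype.sum_prod_type]
  rfl

variable [Fintype S] [DecidableEq S]

section pathSum

variable {R : Type*} [CommSemiring R] (B : Matrix S S R)

def pathSum (r : ℕ) (m n : S) (c : (Fin (r + 1) → S) → R) : R :=
  ∑ γ, if γ 0 = m ∧ γ (Fin.last r) = n then c γ * pathWeight B γ else 0

theorem pathSum_zero (m n : S) (c : (Fin 1 → S) → R) :
    pathSum B 0 m n c = if m = n then c (fun _ => m) else 0 := by
  rw [pathSum, ← (Equiv.funUnique (Fin 1) S).symm.sum_comp]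
  simp [pathWeight, ite_and]
  rfl

theorem pathSum_succ (k : ℕ) (m n : S) (c : (Fin (k + 2) → S) → R) :
    pathSum B (k + 1) m n c = ∑ ℓ, B m ℓ * pathSum B k ℓ n (fun δ => c (Fin.cons m δ)) := by
  simp only [pathSum, sum_pi_fin_succ (k := k + 1), Fin.cons_zero, cons_last, pathWeight_cons,
    ite_and, mul_sum, mul_ite, mul_zero]
  rw [sum_comm, sum_comm (γ := S)]
  refine sum_congr rfl fun δ _ => ?_
  simp only [sum_ite_eq', sum_ite_eq, mem_univ, if_true]
  split_ifs <;> ring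

theorem pathSum_add (r : ℕ) (m n : S) (c c' : (Fin (r + 1) → S) → R) :
    pathSum B r m n (c + c') = pathSum B r m n c + pathSum B r m n c' := by
  simp only [pathSum, ← sum_add_distrib]
  refine sum_congr rfl fun γ _ => ?_
  split_ifs <;> simp [add_mul]

theorem pathSum_mul_left (r : ℕ) (m n : S) (a : R) (c : (Fin (r + 1) → S) → R) :
    pathSum B r m n (fun γ => a * c γ) = a * pathSum B r m n c := by
  simp only [pathSum, mul_sum, mul_ite, mul_zero, mul_assoc]

theorem pathSum_mem_span (r : ℕ) (m n : S) (c : (Fin (r + 1) → S) → R) :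
    pathSum B r m n c ∈ Submodule.span R (pathWeight B '' paths r m n) := by
  refine Submodule.sum_mem _ fun γ _ => ?_
  split_ifs with h
  · exact Submodule.smul_mem _ _ (Submodule.subset_span ⟨γ, h, rfl⟩)
  · exact Submodule.zero_mem _

end pathSum

theorem exists_pathSum_eq_of_sub_mem_span {R : Type*} [CommRing R] (B : Matrix S S R)
    {r : ℕ} {m n : S} {x : R} (c : (Fin (r + 1) → S) → R)
    (hx : x - pathSum B r m n c ∈ Submodule.span R (pathWeight B '' reduciblePaths r m n)) :
    ∃ l : (Fin (r + 1) → S) → R,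
      x = pathSum B r m n (c + l) ∧ ∀ γ, IsIrreducible n γ → l γ = 0 := by
  obtain ⟨l, hl, hlx⟩ := (Finsupp.mem_span_image_iff_linearCombination R).1 hx
  rw [Finsupp.mem_supported'] at hl
  refine ⟨l, ?_, fun γ hγ => hl γ fun h => h.2 hγ⟩
  rw [pathSum_add, ← sub_eq_iff_eq_add', ← hlx, Finsupp.linearCombination_apply,
    Finsupp.sum_fintype _ _ (by simp)]
  refine sum_congr rfl fun γ _ => ?_
  split_ifs with h
  · rfl
  · rw [hl γ fun h' => h h'.1, zero_smul]

section irredSum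

variable {K : Type*} [Field K] (D : S → K) (B : Matrix S S K) (n : S)

noncomputable def irredSum (r : ℕ) (m : S) : K :=
  pathSum B r m n (irredCoeff D n)

theorem irredSum_zero (ℓ : S) : irredSum D B n 0 ℓ = if ℓ = n then 1 else 0 := by
  have hirr : IsIrreducible n (fun _ : Fin 1 => ℓ) := fun j hj => absurd (Fin.ext (by omega)) hj
  simp [irredSum, pathSum_zero, irredCoeff, hirr]

theorem irredSum_succ (k : ℕ) {m : S} (hm : m ≠ n) :
    irredSum D B n (k + 1) m = (D n - D m)⁻¹ * ∑ ℓ, B m ℓ * irredSum D B n k ℓ := by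
  simp only [irredSum, pathSum_succ, irredCoeff_cons, if_neg hm, pathSum_mul_left, mul_sum]
  exact sum_congr rfl fun ℓ _ => mul_left_comm _ _ _

theorem irredSum_self {k : ℕ} (hk : 1 ≤ k) : irredSum D B n k n = 0 := by
  refine sum_eq_zero fun γ _ => ?_
  split_ifs with h
  · have hred : ¬IsIrreducible n γ :=
      fun hirr => hirr 0 (fun h0 => by simp [Fin.ext_iff] at h0; omega) h.1
    simp [irredCoeff, hred]
  · rfl

theorem sub_irredSum_mem_span (η : ℕ → K) (u : ℕ → S → K)
    (hu1 : ∀ m, m ≠ n → u 1 m = B m n / (D n - D m))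
    (hηr : ∀ r, 2 ≤ r → η r = ∑ m ∈ Finset.univ.erase n, B n m * u (r - 1) m)
    (hur : ∀ r, 2 ≤ r → ∀ m, m ≠ n → u r m = (D n - D m)⁻¹ *
      ((∑ ℓ ∈ Finset.univ.erase n, B m ℓ * u (r - 1) ℓ)
        - ∑ s ∈ Finset.Icc 2 (r - 1), η s * u (r - s) m))
    {r : ℕ} (hr : 1 ≤ r) {m : S} (hm : m ≠ n) :
    u r m - irredSum D B n r m ∈ Submodule.span K (pathWeight B '' reduciblePaths r m n) := by
  induction r using Nat.strong_induction_on generalizing m with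
  | _ r ih =>
  rcases Nat.lt_or_ge r 2 with hr2 | hr2
  · obtain rfl : r = 1 := by omega
    rw [hu1 m hm, irredSum_succ D B n 0 hm]
    simp [irredSum_zero, div_eq_inv_mul]
  obtain ⟨k, rfl⟩ := Nat.exists_eq_add_of_le' hr2
  have mem_span_paths : ∀ r < k + 2, 1 ≤ r → ∀ ℓ, ℓ ≠ n →
      u r ℓ ∈ Submodule.span K (pathWeight B '' paths r ℓ n) := fun r hrk hr ℓ hℓ =>
    sub_add_cancel (u r ℓ) (irredSum D B n r ℓ) ▸ Submodule.add_mem _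
      (Submodule.span_mono (Set.image_mono fun _ h => h.1) (ih r hrk hr hℓ))
      (pathSum_mem_span B r ℓ n _)
  have eta_mem_span_paths : ∀ t, t + 2 ≤ k + 1 →
      η (t + 2) ∈ Submodule.span K (pathWeight B '' paths (t + 2) n n) := fun t ht => by
    rw [hηr (t + 2) (by omega)]
    exact Submodule.sum_mem _ fun ℓ hℓ => mul_mem_span_paths_cons B n ℓ n
      (mem_span_paths (t + 1) (by omega) (by omega) ℓ (mem_erase.1 hℓ).1)
  have hsum : ∑ ℓ, B m ℓ * irredSum D B n (k + 1) ℓ =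
      ∑ ℓ ∈ univ.erase n, B m ℓ * irredSum D B n (k + 1) ℓ := by
    rw [sum_erase _ (by rw [irredSum_self D B n (by omega), mul_zero])]
  rw [hur (k + 2) (by omega) m hm, irredSum_succ D B n (k + 1) hm, hsum, ← mul_sub,
    sub_right_comm, ← sum_sub_distrib]
  simp only [← mul_sub]
  refine Submodule.smul_mem _ _ (Submodule.sub_mem _ (Submodule.sum_mem _ fun ℓ hℓ => ?_)
    (Submodule.sum_mem _ fun s hs => ?_))
  · exact mul_mem_span_reducible_cons B m ℓ n
      (ih (k + 1) (by omega) (by omega) (mem_erase.1 hℓ).1)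
  · obtain ⟨t, rfl⟩ : ∃ t, s = t + 2 := ⟨s - 2, by simp at hs; omega⟩
    have ht : t + 2 ≤ k + 1 := (mem_Icc.1 hs).2
    rw [mul_comm]
    exact mul_mem_span_concat B (by omega) (by omega)
      (mem_span_paths (k + 2 - (t + 2)) (by omega) (by omega) m hm) (eta_mem_span_paths t ht)

end irredSum

end PathExpansion

theorem u_path_expansion_general {S : Type*} [Fintype S] [DecidableEq S]
    (D : S → ℂ)
    (B : Matrix S S ℂ)
    (n : S) (η : ℕ → ℂ) (u : ℕ → S → ℂ)
    (hu1 : ∀ m, m ≠ n → u 1 m = B m n / (D n - D m))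
    (hηr : ∀ r, 2 ≤ r → η r = ∑ m ∈ Finset.univ.erase n, B n m * u (r - 1) m)
    (hur : ∀ r, 2 ≤ r → ∀ m, m ≠ n → u r m = (D n - D m)⁻¹ *
      ((∑ ℓ ∈ Finset.univ.erase n, B m ℓ * u (r - 1) ℓ)
        - ∑ s ∈ Finset.Icc 2 (r - 1), η s * u (r - s) m)) :
    ∀ r : ℕ, 1 ≤ r → ∀ m : S, m ≠ n → ∃ g : (Fin (r + 1) → S) → ℂ,
      (u r m = ∑ γ : Fin (r + 1) → S,
        if γ 0 = m ∧ γ (Fin.last r) = n then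
          g γ * ∏ i : Fin r, B (γ i.castSucc) (γ i.succ)
        else 0) ∧
      (∀ γ : Fin (r + 1) → S, γ 0 = m → γ (Fin.last r) = n →
        (∀ j : Fin (r + 1), j ≠ Fin.last r → γ j ≠ n) →
        g γ = ∏ j : Fin (r + 1),
          if j ≠ Fin.last r then (D n - D (γ j))⁻¹ else 1) := by
  intro r hr m hm
  obtain ⟨l, hu, hl⟩ := PathExpansion.exists_pathSum_eq_of_sub_mem_span B
    (PathExpansion.irredCoeff D n)
    (PathExpansion.sub_irredSum_mem_span D B n η u hu1 hηr hur hr hm)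
  refine ⟨PathExpansion.irredCoeff D n + l, hu, fun γ _ _ hγ => ?_⟩
  rw [Pi.add_apply, hl γ hγ, add_zero, PathExpansion.irredCoeff_of_isIrreducible D n hγ]

/-- Rayleigh–Schrödinger path expansion: for `r ≥ 1` and `m ≠ n`, the eigenvector
coefficient `(u_n^{(r)})_m` is a sum over paths of length `r` from `m` to `n` of
`g(γ, D) B_γ`, where for an irreducible path `γ = (n_0, …, n_r)` one has
`g(γ, D) = ∏_{j=0}^{r-1} (D_n - D_{n_j})⁻¹`. -/
theorem u_path_expansion {S : Type*} [Fintype S] [DecidableEq S] [Nonempty S]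
    (D : S → ℂ) (hD : Function.Injective D)
    (B : Matrix S S ℂ) (hB : ∀ m, B m m = 0)
    (n : S) (η : ℕ → ℂ) (u : ℕ → S → ℂ)
    (hη0 : η 0 = D n) (hη1 : η 1 = 0) (hu0 : u 0 = Pi.single n 1)
    (hun : ∀ r, 1 ≤ r → u r n = 0)
    (hu1 : ∀ m, m ≠ n → u 1 m = B m n / (D n - D m))
    (hηr : ∀ r, 2 ≤ r → η r = ∑ m ∈ Finset.univ.erase n, B n m * u (r - 1) m)
    (hur : ∀ r, 2 ≤ r → ∀ m, m ≠ n → u r m = (D n - D m)⁻¹ *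
      ((∑ ℓ ∈ Finset.univ.erase n, B m ℓ * u (r - 1) ℓ)
        - ∑ s ∈ Finset.Icc 2 (r - 1), η s * u (r - s) m)) :
    ∀ r : ℕ, 1 ≤ r → ∀ m : S, m ≠ n → ∃ g : (Fin (r + 1) → S) → ℂ,
      (u r m = ∑ γ : Fin (r + 1) → S,
        if γ 0 = m ∧ γ (Fin.last r) = n then
          g γ * ∏ i : Fin r, B (γ i.castSucc) (γ i.succ)
        else 0) ∧
      (∀ γ : Fin (r + 1) → S, γ 0 = m → γ (Fin.last r) = n →
        (∀ j : Fin (r + 1), j ≠ Fin.last r → γ j ≠ n) →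
        g γ = ∏ j : Fin (r + 1),
          if j ≠ Fin.last r then (D n - D (γ j))⁻¹ else 1) :=
  u_path_expansion_general D B n η u hu1 hηr hur
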